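/- arXiv:2104.04419 — 2 statements merged into one kernel-verified Lean document; each statement's English description precedes it below -/
import Mathlib

section
/- For every q > 1 and all positive definite density matrices ρ and σ on a finite-dimensional complex Hilbert space, the q-geometric Rényi divergence satisfies D̂_q(ρ‖σ) ≤ ‖σ⁻¹ρ − 1‖, where ‖·‖ is the operator norm and 1 is the identity operator. -/
open scoped Kronecker ComplexOrder

namespace QIT

variable {n : Type*} [Fintype n] [DecidableEq n]

/-- Operator norm of a matrix, i.e. the norm of the induced operator on Euclidean space. -/
noncomputable def opNorm (M : Matrix n n ℂ) : ℝ :=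
  ‖Matrix.toEuclideanCLM (𝕜 := ℂ) M‖

/-- Functional calculus for Hermitian matrices (junk value `0` on non-Hermitian inputs). -/
noncomputable def matCfc (f : ℝ → ℝ) (M : Matrix n n ℂ) : Matrix n n ℂ :=
  if hM : M.IsHermitian then
    (hM.eigenvectorUnitary : Matrix n n ℂ) *
      Matrix.diagonal (fun i => (f (hM.eigenvalues i) : ℂ)) *
      star (hM.eigenvectorUnitary : Matrix n n ℂ)
  else 0

/-- Matrix logarithm via the functional calculus. -/
noncomputable def mlog (M : Matrix n n ℂ) : Matrix n n ℂ := matCfc Real.log M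

/-- Real powers of a matrix via the functional calculus. -/
noncomputable def mpow (M : Matrix n n ℂ) (q : ℝ) : Matrix n n ℂ :=
  matCfc (fun x => x ^ q) M

/-- Umegaki relative entropy `D(ρ‖σ) = Tr[ρ (log ρ - log σ)]`. -/
noncomputable def relEntropy (ρ σ : Matrix n n ℂ) : ℝ :=
  (Matrix.trace (ρ * (mlog ρ - mlog σ))).re

/-- Belavkin-Staszewski relative entropy `D̂(ρ‖σ) = Tr[ρ log (ρ^{1/2} σ⁻¹ ρ^{1/2})]`. -/
noncomputable def bsEntropy (ρ σ : Matrix n n ℂ) : ℝ :=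
  (Matrix.trace (ρ * mlog (mpow ρ (1/2) * σ⁻¹ * mpow ρ (1/2)))).re

/-- `q`-geometric Rényi divergence
`D̂_q(ρ‖σ) = (q-1)⁻¹ log Tr[σ^{1/2} (σ^{-1/2} ρ σ^{-1/2})^q σ^{1/2}]`. -/
noncomputable def geomRenyi (q : ℝ) (ρ σ : Matrix n n ℂ) : ℝ :=
  (q - 1)⁻¹ *
    Real.log
      (Matrix.trace
        (mpow σ (1/2) * mpow (mpow σ (-(1/2)) * ρ * mpow σ (-(1/2))) q * mpow σ (1/2))).re

/-- Trace norm `‖M‖₁ = Tr ((M† M)^{1/2})`. -/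
noncomputable def traceNorm (M : Matrix n n ℂ) : ℝ :=
  (((Matrix.isHermitian_conjTranspose_mul_self M).eigenvectorUnitary : Matrix n n ℂ) *
      Matrix.diagonal (((↑) : ℝ → ℂ) ∘ (√·) ∘ (Matrix.isHermitian_conjTranspose_mul_self M).eigenvalues) *
      (star (Matrix.isHermitian_conjTranspose_mul_self M).eigenvectorUnitary :
        Matrix n n ℂ)).trace.re

/-- Partial trace over the second tensor factor. -/
noncomputable def ptraceRight {a c : Type*} [Fintype a] [Fintype c]
    (M : Matrix (a × c) (a × c) ℂ) : Matrix a a ℂ :=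
  fun i j => ∑ k, M (i, k) (j, k)

/-- Partial trace over the first tensor factor. -/
noncomputable def ptraceLeft {a c : Type*} [Fintype a] [Fintype c]
    (M : Matrix (a × c) (a × c) ℂ) : Matrix c c ℂ :=
  fun i j => ∑ k, M (k, i) (k, j)

/-! Put `A = σ^{-1/2} ρ σ^{-1/2}` and `k = 1 + ‖σ⁻¹ρ - 1‖`. Conjugation by `σ^{1/2}` makes
`σ⁻¹ρ` similar to `A`, so every eigenvalue `x` of `A` has `x - 1 ≤ ‖σ⁻¹ρ - 1‖`, i.e. `x ≤ k`.
Hence `A^q ≤ k^{q-1} A` in the Loewner order; conjugating by `σ^{1/2}` and taking traces gives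
`Tr[σ^{1/2} A^q σ^{1/2}] ≤ k^{q-1} Tr ρ = k^{q-1}`, so `D̂_q(ρ‖σ) ≤ log k ≤ k - 1`. -/

open scoped MatrixOrder

section FunctionalCalculus

variable {M : Matrix n n ℂ}

lemma continuousOn_spectrum (f : ℝ → ℝ) (M : Matrix n n ℂ) : ContinuousOn f (spectrum ℝ M) :=
  M.finite_real_spectrum.continuousOn f

lemma matCfc_eq_cfc (hM : M.IsHermitian) (f : ℝ → ℝ) : matCfc f M = cfc f M := by
  rw [hM.cfc_eq, Matrix.IsHermitian.cfc, matCfc, dif_pos hM]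
  rfl

lemma _root_.Matrix.PosSemidef.nonneg_of_mem_spectrum (hM : M.PosSemidef) {x : ℝ}
    (hx : x ∈ spectrum ℝ M) : 0 ≤ x :=
  (StarOrderedRing.nonneg_iff_spectrum_nonneg M).1 hM.nonneg x hx

lemma _root_.Matrix.PosDef.pos_of_mem_spectrum (hM : M.PosDef) {x : ℝ}
    (hx : x ∈ spectrum ℝ M) : 0 < x :=
  (StarOrderedRing.isStrictlyPositive_iff_spectrum_pos M).1 hM.isStrictlyPositive x hx

lemma mpow_zero (hM : M.IsHermitian) : mpow M 0 = 1 := by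
  simpa [mpow, matCfc_eq_cfc hM] using cfc_const_one ℝ M

lemma mpow_one (hM : M.IsHermitian) : mpow M 1 = M := by
  simpa [mpow, matCfc_eq_cfc hM] using cfc_id' ℝ M hM.isSelfAdjoint

lemma mpow_add (hM : M.PosDef) (p q : ℝ) : mpow M (p + q) = mpow M p * mpow M q := by
  simp only [mpow, matCfc_eq_cfc hM.1]
  rw [← cfc_mul _ _ M (continuousOn_spectrum _ M) (continuousOn_spectrum _ M)]
  exact cfc_congr fun x hx => Real.rpow_add (hM.pos_of_mem_spectrum hx) p q

lemma isHermitian_mpow (hM : M.IsHermitian) (p : ℝ) : (mpow M p).IsHermitian := by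
  rw [mpow, matCfc_eq_cfc hM]
  exact cfc_predicate _ M

lemma posDef_mpow (hM : M.PosDef) (p : ℝ) : (mpow M p).PosDef := by
  rw [mpow, matCfc_eq_cfc hM.1, ← Matrix.isStrictlyPositive_iff_posDef,
    cfc_isStrictlyPositive_iff _ M (continuousOn_spectrum _ M)]
  exact fun x hx => Real.rpow_pos_of_pos (hM.pos_of_mem_spectrum hx) p

lemma _root_.Real.rpow_le_rpow_sub_one_mul {x k q : ℝ} (hx : 0 ≤ x) (hxk : x ≤ k) (hq : 1 ≤ q) :
    x ^ q ≤ k ^ (q - 1) * x :=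
  calc x ^ q = x ^ (q - 1) * x := by
        rw [← Real.rpow_add_one' hx (by linarith), sub_add_cancel]
    _ ≤ k ^ (q - 1) * x := by gcongr

lemma mpow_le_rpow_smul (hM : M.PosSemidef) {k q : ℝ} (hk : ∀ x ∈ spectrum ℝ M, x ≤ k)
    (hq : 1 ≤ q) : mpow M q ≤ k ^ (q - 1) • M := by
  rw [mpow, matCfc_eq_cfc hM.1]
  nth_rw 2 [← cfc_id' ℝ M]
  rw [← cfc_smul _ _ M (continuousOn_spectrum _ M)]
  exact cfc_mono
    (fun x hx => Real.rpow_le_rpow_sub_one_mul (hM.nonneg_of_mem_spectrum hx) (hk x hx) hq)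
    (continuousOn_spectrum _ M) (continuousOn_spectrum _ M)

end FunctionalCalculus

section GeometricRenyi

variable {ρ σ : Matrix n n ℂ}

noncomputable def invSqrtConj (σ ρ : Matrix n n ℂ) : Matrix n n ℂ :=
  mpow σ (-(1/2)) * ρ * mpow σ (-(1/2))

noncomputable def geomRenyiTrace (q : ℝ) (ρ σ : Matrix n n ℂ) : ℝ :=
  (mpow σ (1/2) * mpow (invSqrtConj σ ρ) q * mpow σ (1/2)).trace.re

lemma geomRenyi_eq (q : ℝ) (ρ σ : Matrix n n ℂ) :
    geomRenyi q ρ σ = (q - 1)⁻¹ * Real.log (geomRenyiTrace q ρ σ) := rfl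

lemma mpow_half_mul_mpow_neg_half (hσ : σ.PosDef) : mpow σ (1/2) * mpow σ (-(1/2)) = 1 := by
  rw [← mpow_add hσ, add_neg_cancel, mpow_zero hσ.1]

lemma mpow_neg_half_mul_mpow_half (hσ : σ.PosDef) : mpow σ (-(1/2)) * mpow σ (1/2) = 1 := by
  rw [← mpow_add hσ, neg_add_cancel, mpow_zero hσ.1]

lemma mpow_half_conj_invSqrtConj (hσ : σ.PosDef) :
    mpow σ (1/2) * invSqrtConj σ ρ * mpow σ (1/2) = ρ := by
  simp only [invSqrtConj, ← mul_assoc, mpow_half_mul_mpow_neg_half hσ, one_mul]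
  rw [mul_assoc, mpow_neg_half_mul_mpow_half hσ, mul_one]

lemma inv_eq_mpow_neg_half_mul_self (hσ : σ.PosDef) :
    σ⁻¹ = mpow σ (-(1/2)) * mpow σ (-(1/2)) := by
  refine Matrix.inv_eq_left_inv ?_
  nth_rw 3 [← mpow_one hσ.1]
  rw [← mpow_add hσ, ← mpow_add hσ]
  norm_num [mpow_zero hσ.1]

lemma spectrum_inv_mul (hσ : σ.PosDef) :
    spectrum ℂ (σ⁻¹ * ρ) = spectrum ℂ (invSqrtConj σ ρ) := by
  let u : (Matrix n n ℂ)ˣ :=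
    ⟨_, _, mpow_neg_half_mul_mpow_half hσ, mpow_half_mul_mpow_neg_half hσ⟩
  have hconj : σ⁻¹ * ρ = u * invSqrtConj σ ρ * (↑u⁻¹ : Matrix n n ℂ) := by
    simp only [u, invSqrtConj, Units.inv_mk, inv_eq_mpow_neg_half_mul_self hσ, mul_assoc,
      mpow_neg_half_mul_mpow_half hσ, mul_one]
  rw [hconj, spectrum.units_conjugate]

lemma norm_sub_one_le_opNorm [Nonempty n] {M : Matrix n n ℂ} {z : ℂ} (hz : z ∈ spectrum ℂ M) :
    ‖z - 1‖ ≤ opNorm (M - 1) := by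
  apply spectrum.norm_le_norm_of_mem
  rw [AlgEquiv.spectrum_eq, ← map_one (algebraMap ℂ _), ← spectrum.sub_singleton_eq]
  exact Set.sub_mem_sub hz rfl

lemma le_one_add_opNorm_of_mem_spectrum [Nonempty n] (hσ : σ.PosDef) {x : ℝ}
    (hx : x ∈ spectrum ℝ (invSqrtConj σ ρ)) : x ≤ 1 + opNorm (σ⁻¹ * ρ - 1) := by
  rw [← spectrum.algebraMap_mem_iff ℂ, ← spectrum_inv_mul hσ] at hx
  have := norm_sub_one_le_opNorm hx
  rw [Complex.coe_algebraMap, ← Complex.ofReal_one, ← Complex.ofReal_sub, Complex.norm_real,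
    Real.norm_eq_abs] at this
  linarith [le_abs_self (x - 1)]

lemma posSemidef_invSqrtConj (hσ : σ.IsHermitian) (hρ : ρ.PosSemidef) :
    (invSqrtConj σ ρ).PosSemidef := by
  have := hρ.mul_mul_conjTranspose_same (mpow σ (-(1/2)))
  rwa [(isHermitian_mpow hσ _).eq] at this

lemma posDef_invSqrtConj (hσ : σ.PosDef) (hρ : ρ.PosDef) : (invSqrtConj σ ρ).PosDef := by
  have := hρ.mul_mul_conjTranspose_same
    (Matrix.vecMul_injective_iff_isUnit.2 (posDef_mpow hσ (-(1/2))).isUnit)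
  rwa [(isHermitian_mpow hσ.1 _).eq] at this

lemma geomRenyiTrace_le (hσ : σ.PosDef) (hρ : ρ.PosSemidef) {q k : ℝ} (hq : 1 ≤ q)
    (hk : ∀ x ∈ spectrum ℝ (invSqrtConj σ ρ), x ≤ k) :
    geomRenyiTrace q ρ σ ≤ k ^ (q - 1) * ρ.trace.re := by
  have hle : mpow σ (1/2) * mpow (invSqrtConj σ ρ) q * mpow σ (1/2) ≤ k ^ (q - 1) • ρ := by
    have := star_left_conjugate_le_conjugate
      (mpow_le_rpow_smul (posSemidef_invSqrtConj hσ.1 hρ) hk hq) (mpow σ (1/2))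
    rwa [Matrix.star_eq_conjTranspose, (isHermitian_mpow hσ.1 _).eq, mul_smul_comm,
      smul_mul_assoc, mpow_half_conj_invSqrtConj hσ] at this
  have := (Matrix.nonneg_iff_posSemidef.1 (sub_nonneg.2 hle)).trace_nonneg
  rw [Matrix.trace_sub, Matrix.trace_smul, sub_nonneg, Complex.le_def] at this
  exact this.1.trans_eq (by simp)

lemma geomRenyiTrace_pos [Nonempty n] (hσ : σ.PosDef) (hρ : ρ.PosDef) (q : ℝ) :
    0 < geomRenyiTrace q ρ σ := by
  have := ((posDef_mpow (posDef_invSqrtConj hσ hρ) q).mul_mul_conjTranspose_same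
    (Matrix.vecMul_injective_iff_isUnit.2 (posDef_mpow hσ (1/2)).isUnit)).trace_pos
  rw [(isHermitian_mpow hσ.1 _).eq] at this
  exact (Complex.pos_iff.1 this).1

end GeometricRenyi

theorem geomRenyi_le_opNorm_general {n : Type*} [Fintype n] [DecidableEq n]
    (q : ℝ) (hq : 1 < q) (ρ σ : Matrix n n ℂ)
    (hρ : ρ.PosDef) (hσ : σ.PosDef)
    (hρtr : ρ.trace = 1) :
    geomRenyi q ρ σ ≤ opNorm (σ⁻¹ * ρ - 1) := by
  have : Nonempty n := by
    by_contra h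
    simp [not_nonempty_iff.1 h, Matrix.trace] at hρtr
  have hq' : 0 < q - 1 := sub_pos.2 hq
  set k := 1 + opNorm (σ⁻¹ * ρ - 1)
  have hk : 0 < k := by unfold k opNorm; positivity
  have htrace : geomRenyiTrace q ρ σ ≤ k ^ (q - 1) := by
    simpa [hρtr] using geomRenyiTrace_le hσ hρ.posSemidef hq.le
      fun x hx => le_one_add_opNorm_of_mem_spectrum hσ hx
  calc geomRenyi q ρ σ = (q - 1)⁻¹ * Real.log (geomRenyiTrace q ρ σ) := geomRenyi_eq q ρ σ
    _ ≤ (q - 1)⁻¹ * Real.log (k ^ (q - 1)) := by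
      gcongr
      exact geomRenyiTrace_pos hσ hρ q
    _ = Real.log k := by
      rw [Real.log_rpow hk]
      field_simp
    _ ≤ k - 1 := Real.log_le_sub_one_of_pos hk
    _ = opNorm (σ⁻¹ * ρ - 1) := by ring

/-- For every `q > 1` and all positive definite density matrices `ρ`, `σ`,
the `q`-geometric Rényi divergence satisfies `D̂_q(ρ‖σ) ≤ ‖σ⁻¹ ρ - 1‖`. -/
theorem geomRenyi_le_opNorm {n : Type*} [Fintype n] [DecidableEq n]
    (q : ℝ) (hq : 1 < q) (ρ σ : Matrix n n ℂ)
    (hρ : ρ.PosDef) (hσ : σ.PosDef)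
    (hρtr : ρ.trace = 1) (hσtr : σ.trace = 1) :
    geomRenyi q ρ σ ≤ opNorm (σ⁻¹ * ρ - 1) :=
  geomRenyi_le_opNorm_general q hq ρ σ hρ hσ hρtr

end QIT
end

section
/- Let d ≥ 2, let M ⊂ ℤ be a finite interval, let H be a self-adjoint operator on ℋ_M, and let 𝒢 > 1. Write I_n := M ∩ [1−n, n] and, for Λ' ⊆ M, let ‖Q‖_{Λ'} denote the operator-norm distance from Q ∈ 𝔄_M to the subalgebra of operators supported in Λ'. Assume that for every n ≥ 1, every s ∈ ℂ with |s| ≤ 1, and every operator R ∈ 𝔄_M supported in I_n, one has ‖e^{isH} R e^{−isH}‖ ≤ 𝒢^{2n} ‖R‖. Then for every Q ∈ 𝔄_M and every s ∈ ℂ with |s| ≤ 1: ‖e^{isH} Q e^{−isH}‖ ≤ 𝒢² ‖Q‖ + (1 + 𝒢²) Σ_{n ≥ 1} 𝒢^{2n} ‖Q‖_{I_n} (the sum is finite since ‖Q‖_{I_n} = 0 once I_n = M). -/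
/-!
Choose observables `S n` supported in `I_{n+1}` with `‖Q - S n‖` within `δ` of `‖Q‖_{I_{n+1}}`,
and `S N = Q` once `I_{N+1} = M`. In the telescoping sum `Q = S 0 + ∑ (S (n+1) - S n)` the
`n`-th difference is supported in `I_{n+2}` and has norm at most
`‖Q‖_{I_{n+1}} + ‖Q‖_{I_{n+2}} + 2δ`, so the hypothesis bounds each term. Every
`‖Q‖_{I_n}` then occurs with weight `G^{2n} + G^{2n+2} = (1 + G²) G^{2n}`; let `δ → 0`.
-/

open Matrix
open scoped ComplexOrder

namespace SpinChain

variable (d : ℕ)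

/-- Configurations of the spins in the finite region `Λ ⊂ ℤ`. -/
abbrev Cfg (Λ : Finset ℤ) : Type := (x : Λ) → Fin d

/-- The algebra of observables on the region `Λ`, i.e. linear operators on
`ℋ_Λ = ⊗_{x ∈ Λ} ℂ^d`. -/
abbrev Obs (Λ : Finset ℤ) : Type := Matrix (Cfg d Λ) (Cfg d Λ) ℂ

/-- Operator norm of an observable. -/
noncomputable def opNorm {Λ : Finset ℤ} (M : Obs d Λ) : ℝ :=
  ‖Matrix.toEuclideanCLM (𝕜 := ℂ) M‖

/-- Trace norm `‖M‖₁ = Tr ((M†M)^{1/2})` of an observable. -/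
noncomputable def traceNorm {Λ : Finset ℤ} (M : Obs d Λ) : ℝ :=
  (((Matrix.posSemidef_conjTranspose_mul_self M).1.eigenvectorUnitary.1 *
      Matrix.diagonal (((↑) : ℝ → ℂ) ∘ Real.sqrt ∘ (Matrix.posSemidef_conjTranspose_mul_self M).1.eigenvalues) *
      (star (Matrix.posSemidef_conjTranspose_mul_self M).1.eigenvectorUnitary : Obs d Λ)).trace).re

/-- Restriction of a configuration to a subregion. -/
def restrict {Λ' Λ : Finset ℤ} (h : Λ' ⊆ Λ) (f : Cfg d Λ) : Cfg d Λ' :=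
  fun x => f ⟨x.1, h x.2⟩

/-- The canonical embedding `𝔄_{Λ'} → 𝔄_Λ`, `R ↦ R ⊗ 1_{Λ ∖ Λ'}`. -/
def embed {Λ' Λ : Finset ℤ} (h : Λ' ⊆ Λ) (R : Obs d Λ') : Obs d Λ :=
  fun f g =>
    if ∀ x : Λ, x.1 ∉ Λ' → f x = g x then R (restrict d h f) (restrict d h g) else 0

/-- An observable `Q ∈ 𝔄_Λ` is supported in `Λ'` if it is the embedding of some
observable on `Λ'`. -/
def SupportedIn {Λ : Finset ℤ} (Λ' : Finset ℤ) (Q : Obs d Λ) : Prop :=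
  ∃ (h : Λ' ⊆ Λ) (R : Obs d Λ'), Q = embed d h R

/-- Operator-norm distance from `Q ∈ 𝔄_Λ` to the subalgebra of observables
supported in `Λ'`. -/
noncomputable def distSupp {Λ : Finset ℤ} (Λ' : Finset ℤ) (h : Λ' ⊆ Λ) (Q : Obs d Λ) : ℝ :=
  sInf {x : ℝ | ∃ R : Obs d Λ', x = opNorm d (Q - embed d h R)}

/-- The extended partial trace `tr_{Λ'} : 𝔄_Λ → 𝔄_Λ`, determined by
`tr_{Λ'}(R ⊗ S) = Tr(R) (1_{Λ'} ⊗ S)`. -/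
noncomputable def ptr {Λ' Λ : Finset ℤ} (h : Λ' ⊆ Λ) (Q : Obs d Λ) : Obs d Λ :=
  fun f g =>
    if restrict d h f = restrict d h g then
      ∑ c : Cfg d Λ',
        Q (fun x => if hx : x.1 ∈ Λ' then c ⟨x.1, hx⟩ else f x)
          (fun x => if hx : x.1 ∈ Λ' then c ⟨x.1, hx⟩ else g x)
    else 0

/-- The (possibly complex time) Heisenberg evolution `Q ↦ e^{isH} Q e^{-isH}`. -/
noncomputable def timeEvol {Λ : Finset ℤ} (H : Obs d Λ) (s : ℂ) (Q : Obs d Λ) : Obs d Λ :=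
  NormedSpace.exp ((Complex.I * s) • H) * Q * NormedSpace.exp (-((Complex.I * s) • H))

/-- A local interaction of range `r` and strength `J` on the chain `ℤ`:
a family of self-adjoint observables `Φ_X ∈ 𝔄_X` with `‖Φ_X‖ ≤ J`, vanishing
whenever `diam X > r`. -/
structure Interaction (r : ℕ) (J : ℝ) where
  φ : (X : Finset ℤ) → Obs d X
  herm : ∀ X, (φ X).IsHermitian
  strength : ∀ X, opNorm d (φ X) ≤ J
  finiteRange : ∀ X : Finset ℤ, ∀ x ∈ X, ∀ y ∈ X, (r : ℤ) < |x - y| → φ X = 0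

variable {d}

/-- The local Hamiltonian `H_Λ = ∑_{X ⊆ Λ} Φ_X`, as an observable on the ambient
region `I ⊇ Λ`. -/
noncomputable def ham {r : ℕ} {J : ℝ} (Φ : Interaction d r J) {I : Finset ℤ}
    (Λ : Finset ℤ) (h : Λ ⊆ I) : Obs d I :=
  ∑ X ∈ Λ.powerset.attach, embed d ((Finset.mem_powerset.mp X.2).trans h) (Φ.φ X.1)

/-- The Gibbs state `ρ^Λ = e^{-H_Λ} / Tr(e^{-H_Λ}) ∈ 𝔄_Λ` (at inverse temperature `β = 1`,
absorbed in the interaction). -/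
noncomputable def gibbs {r : ℕ} {J : ℝ} (Φ : Interaction d r J) (Λ : Finset ℤ) : Obs d Λ :=
  (Matrix.trace (NormedSpace.exp (-(ham Φ Λ (le_refl Λ)))))⁻¹ •
    NormedSpace.exp (-(ham Φ Λ (le_refl Λ)))

/-- The expansional `E_{X,Y} = e^{-H_{X∪Y}} e^{H_X + H_Y}`, as an observable on the
ambient region `I`. -/
noncomputable def expans {r : ℕ} {J : ℝ} (Φ : Interaction d r J) {I : Finset ℤ}
    (X Y : Finset ℤ) (hX : X ⊆ I) (hY : Y ⊆ I) : Obs d I :=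
  NormedSpace.exp (-(ham Φ (X ∪ Y) (Finset.union_subset hX hY))) *
    NormedSpace.exp (ham Φ X hX + ham Φ Y hY)

/-- `tr_Λ(ρ^Λ Q)`, where `ρ^Λ` is the Gibbs state on `Λ` embedded in `𝔄_I`. -/
noncomputable def trGibbs {r : ℕ} {J : ℝ} (Φ : Interaction d r J) {I : Finset ℤ}
    {Λ : Finset ℤ} (h : Λ ⊆ I) (Q : Obs d I) : Obs d I :=
  ptr d h (embed d h (gibbs Φ Λ) * Q)

/-- The finite-volume Gibbs expectation value `ψ_Λ(Q) = Tr(ρ^Λ Q)`. -/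
noncomputable def expec {r : ℕ} {J : ℝ} (Φ : Interaction d r J) (Λ : Finset ℤ)
    (Q : Obs d Λ) : ℂ :=
  Matrix.trace (gibbs Φ Λ * Q)

/-- The interaction `Φ` satisfies *uniform clustering* with decay function `ε`:
for every finite interval `I = ABC` split into three adjacent subintervals with
`|B| ≥ ℓ`, the covariance correlation of the Gibbs state `ρ^I` between `A` and `C`
is at most `ε ℓ`. -/
def UniformClustering {r : ℕ} {J : ℝ} (Φ : Interaction d r J) (ε : ℕ → ℝ) : Prop :=
  ∀ (a b c e : ℤ) (hab : a ≤ b) (hbc : b ≤ c) (hce : c ≤ e) (ℓ : ℕ), (ℓ : ℤ) ≤ c - b →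
    ∀ (QA : Obs d (Finset.Ico a b)) (QC : Obs d (Finset.Ico c e)),
      opNorm d QA ≤ 1 → opNorm d QC ≤ 1 →
      ‖(expec Φ (Finset.Ico a e)
            (embed d (Finset.Ico_subset_Ico le_rfl (hbc.trans hce)) QA *
              embed d (Finset.Ico_subset_Ico (hab.trans hbc) le_rfl) QC) -
          expec Φ (Finset.Ico a e)
              (embed d (Finset.Ico_subset_Ico le_rfl (hbc.trans hce)) QA) *
            expec Φ (Finset.Ico a e)
              (embed d (Finset.Ico_subset_Ico (hab.trans hbc) le_rfl) QC))‖ ≤ ε ℓ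

end SpinChain

section Telescoping

open Finset Metric

variable {E F : Type*} [SeminormedAddCommGroup E] [SeminormedAddCommGroup F]
  (T : E →+ F) {V : ℕ → AddSubgroup E} {c : ℕ → ℝ}

theorem norm_map_le_add_sum_mul_norm_sub (hV : Monotone V) (hc : ∀ n, 0 ≤ c n)
    (hT : ∀ n, ∀ x ∈ V n, ‖T x‖ ≤ c n * ‖x‖) {N : ℕ} {Q : E} (S : ℕ → E)
    (hS : ∀ n, S n ∈ V n) (hSN : S N = Q) :
    ‖T Q‖ ≤ c 0 * ‖Q‖ + ∑ n ∈ range N, (c n + c (n + 1)) * ‖Q - S n‖ := by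
  have hfirst : ‖T (S 0)‖ ≤ c 0 * (‖Q‖ + ‖Q - S 0‖) :=
    (hT 0 _ (hS 0)).trans (mul_le_mul_of_nonneg_left (norm_le_norm_add_norm_sub _ _) (hc 0))
  have hstep (n : ℕ) : ‖T (S (n + 1) - S n)‖ ≤ c (n + 1) * (‖Q - S n‖ + ‖Q - S (n + 1)‖) := by
    refine (hT (n + 1) _ (sub_mem (hS _) (hV n.le_succ (hS n)))).trans
      (mul_le_mul_of_nonneg_left ?_ (hc _))
    calc ‖S (n + 1) - S n‖ = ‖(Q - S n) - (Q - S (n + 1))‖ := by congr 1; abel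
      _ ≤ ‖Q - S n‖ + ‖Q - S (n + 1)‖ := norm_sub_le _ _
  have htel : T Q = T (S 0) + ∑ n ∈ range N, T (S (n + 1) - S n) := by
    rw [← map_sum, ← map_add, sum_range_sub, hSN, add_sub_cancel]
  have hshift := sum_range_succ' (fun n => c n * ‖Q - S n‖) N
  rw [sum_range_succ, hSN, sub_self, norm_zero, mul_zero, add_zero] at hshift
  calc ‖T Q‖ ≤ ‖T (S 0)‖ + ∑ n ∈ range N, ‖T (S (n + 1) - S n)‖ := by
        rw [htel]; exact (norm_add_le _ _).trans (add_le_add_right (norm_sum_le _ _) _)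
    _ ≤ c 0 * (‖Q‖ + ‖Q - S 0‖) + ∑ n ∈ range N, c (n + 1) * (‖Q - S n‖ + ‖Q - S (n + 1)‖) :=
        add_le_add hfirst (sum_le_sum fun n _ => hstep n)
    _ = c 0 * ‖Q‖ + ∑ n ∈ range N, (c n + c (n + 1)) * ‖Q - S n‖ := by
        simp only [mul_add, add_mul, sum_add_distrib] at hshift ⊢
        linarith

theorem norm_map_le_add_sum_mul_infDist (hV : Monotone V) (hc : ∀ n, 0 ≤ c n)
    (hT : ∀ n, ∀ x ∈ V n, ‖T x‖ ≤ c n * ‖x‖) {N : ℕ} {Q : E} (hQ : Q ∈ V N) :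
    ‖T Q‖ ≤ c 0 * ‖Q‖ + ∑ n ∈ range N, (c n + c (n + 1)) * infDist Q (V n) := by
  set C := ∑ n ∈ range N, (c n + c (n + 1))
  have hC : 0 ≤ C := sum_nonneg fun n _ => add_nonneg (hc n) (hc (n + 1))
  refine le_of_forall_pos_le_add fun ε hε => ?_
  have hδ : 0 < ε / (C + 1) := by positivity
  have happrox (n : ℕ) : ∃ y ∈ (V n : Set E), dist Q y < infDist Q (V n) + ε / (C + 1) :=
    (infDist_lt_iff ⟨0, zero_mem _⟩).1 (lt_add_of_pos_right _ hδ)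
  choose S hSV hSdist using happrox
  have hS (n : ℕ) : Function.update S N Q n ∈ V n := by
    rcases eq_or_ne n N with rfl | hn
    · simpa using hQ
    · simpa [hn] using hSV n
  have key := norm_map_le_add_sum_mul_norm_sub T hV hc hT _ hS (Function.update_self N Q S)
  have hsum : ∑ n ∈ range N, (c n + c (n + 1)) * ‖Q - Function.update S N Q n‖ ≤
      ∑ n ∈ range N, (c n + c (n + 1)) * infDist Q (V n) + ε / (C + 1) * C := by
    rw [mul_sum, ← sum_add_distrib]
    refine sum_le_sum fun n hn => ?_
    rw [Function.update_of_ne (mem_range.1 hn).ne, ← dist_eq_norm]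
    nlinarith [hSdist n, hc n, hc (n + 1)]
  have hεC : ε / (C + 1) * C ≤ ε := by
    rw [div_mul_eq_mul_div, div_le_iff₀ (by positivity)]; nlinarith
  linarith

end Telescoping

namespace SpinChain

open Finset Metric
open scoped Matrix.Norms.L2Operator

variable {d : ℕ} {Λ Λ' Λ'' : Finset ℤ}

theorem opNorm_eq_norm (M : Obs d Λ) : opNorm d M = ‖M‖ := rfl

theorem embed_add (h : Λ' ⊆ Λ) (R₁ R₂ : Obs d Λ') :
    embed d h (R₁ + R₂) = embed d h R₁ + embed d h R₂ := by
  ext f g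
  simp only [embed, Matrix.add_apply]
  split_ifs <;> simp

theorem embed_embed (h₁ : Λ'' ⊆ Λ') (h₂ : Λ' ⊆ Λ) (R : Obs d Λ'') :
    embed d h₂ (embed d h₁ R) = embed d (h₁.trans h₂) R := by
  ext f g
  simp only [embed]
  by_cases c1 : ∀ x : Λ, x.1 ∉ Λ' → f x = g x
  · rw [if_pos c1]
    by_cases c2 : ∀ x : Λ', x.1 ∉ Λ'' → restrict d h₂ f x = restrict d h₂ g x
    · have c : ∀ x : Λ, x.1 ∉ Λ'' → f x = g x := by
        intro x hx
        by_cases hm : x.1 ∈ Λ'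
        · exact c2 ⟨x.1, hm⟩ hx
        · exact c1 x hm
      rw [if_pos c2, if_pos c]
      rfl
    · have c : ¬ ∀ x : Λ, x.1 ∉ Λ'' → f x = g x := fun c =>
        c2 fun x hx => c ⟨x.1, h₂ x.2⟩ hx
      rw [if_neg c2, if_neg c]
  · have c : ¬ ∀ x : Λ, x.1 ∉ Λ'' → f x = g x := fun c =>
      c1 fun x hx => c x fun hxx => hx (h₁ hxx)
    rw [if_neg c1, if_neg c]

theorem embed_self (h : Λ ⊆ Λ) (R : Obs d Λ) : embed d h R = R := by
  ext f g
  exact if_pos fun x hx => absurd x.2 hx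

variable (d) in
def embedAddHom (h : Λ' ⊆ Λ) : Obs d Λ' →+ Obs d Λ :=
  AddMonoidHom.mk' (embed d h) (embed_add h)

variable (d) in
def supported (h : Λ' ⊆ Λ) : AddSubgroup (Obs d Λ) :=
  (embedAddHom d h).range

theorem supportedIn_of_mem_supported {h : Λ' ⊆ Λ} {Q : Obs d Λ} (hQ : Q ∈ supported d h) :
    SupportedIn d Λ' Q := by
  obtain ⟨R, rfl⟩ := hQ
  exact ⟨h, R, rfl⟩

theorem supported_mono (h'' : Λ'' ⊆ Λ) (h' : Λ' ⊆ Λ) (hs : Λ'' ⊆ Λ') :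
    supported d h'' ≤ supported d h' := by
  rintro _ ⟨R, rfl⟩
  exact ⟨embed d hs R, embed_embed hs h' R⟩

theorem mem_supported_of_eq (h : Λ' ⊆ Λ) (e : Λ' = Λ) (Q : Obs d Λ) : Q ∈ supported d h := by
  subst e
  exact ⟨Q, embed_self h Q⟩

theorem infDist_supported_le_distSupp (h : Λ' ⊆ Λ) (Q : Obs d Λ) :
    infDist Q (supported d h : Set (Obs d Λ)) ≤ distSupp d Λ' h Q := by
  refine le_csInf ⟨_, 0, rfl⟩ ?_
  rintro _ ⟨R, rfl⟩
  rw [opNorm_eq_norm, ← dist_eq_norm]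
  exact infDist_le_dist_of_mem ⟨R, rfl⟩

theorem distSupp_of_eq (h : Λ' ⊆ Λ) (e : Λ' = Λ) (Q : Obs d Λ) : distSupp d Λ' h Q = 0 := by
  obtain ⟨R, hR⟩ := mem_supported_of_eq h e Q
  have hbdd : BddBelow {x : ℝ | ∃ R : Obs d Λ', x = opNorm d (Q - embed d h R)} := by
    refine ⟨0, ?_⟩
    rintro _ ⟨R', rfl⟩
    exact norm_nonneg _
  refine le_antisymm ((csInf_le hbdd ⟨R, rfl⟩).trans_eq ?_) ?_
  · rw [opNorm_eq_norm]
    change ‖Q - embedAddHom d h R‖ = 0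
    rw [hR, sub_self, norm_zero]
  · exact Real.sInf_nonneg fun _ ⟨R', hR'⟩ => hR' ▸ norm_nonneg _

noncomputable def timeEvolAddHom (H : Obs d Λ) (s : ℂ) : Obs d Λ →+ Obs d Λ :=
  AddMonoidHom.mk' (timeEvol d H s) fun A B => by simp only [timeEvol, mul_add, add_mul]

theorem exists_forall_Ico_inter_Icc_eq (a b : ℤ) :
    ∃ N : ℕ, ∀ n ≥ N, Ico a b ∩ Icc (1 - ((n : ℤ) + 1)) ((n : ℤ) + 1) = Ico a b := by
  refine ⟨(max (-a) b).toNat, fun n hn => inter_eq_left.2 fun x hx => ?_⟩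
  have := Int.self_le_toNat (max (-a) b)
  simp only [mem_Ico, mem_Icc] at hx ⊢
  omega

theorem locality_of_dynamics_general (d : ℕ) (a b : ℤ) (G : ℝ)
    (H : Obs d (Finset.Ico a b))
    (hyp : ∀ n : ℕ, 1 ≤ n → ∀ s : ℂ, ‖s‖ ≤ 1 →
      ∀ R : Obs d (Finset.Ico a b),
        SupportedIn d (Finset.Ico a b ∩ Finset.Icc (1 - (n : ℤ)) (n : ℤ)) R →
        opNorm d (timeEvol d H s R) ≤ G ^ (2 * n) * opNorm d R)
    (Q : Obs d (Finset.Ico a b)) (s : ℂ) (hs : ‖s‖ ≤ 1) :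
    opNorm d (timeEvol d H s Q) ≤
      G ^ 2 * opNorm d Q +
        (1 + G ^ 2) *
          ∑' n : ℕ,
            G ^ (2 * (n + 1)) *
              distSupp d (Finset.Ico a b ∩ Finset.Icc (1 - ((n : ℤ) + 1)) ((n : ℤ) + 1))
                Finset.inter_subset_left Q := by
  set V : ℕ → AddSubgroup (Obs d (Ico a b)) := fun n =>
    supported d (inter_subset_left : Ico a b ∩ Icc (1 - ((n : ℤ) + 1)) ((n : ℤ) + 1) ⊆ _)
  set c : ℕ → ℝ := fun n => G ^ (2 * (n + 1))
  have hc (n : ℕ) : 0 ≤ c n := by simpa only [c, pow_mul] using pow_nonneg (sq_nonneg G) _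
  have hV : Monotone V := fun m n hmn =>
    supported_mono _ _ (inter_subset_inter_left (Icc_subset_Icc (by omega) (by omega)))
  have hT (n : ℕ) (R) (hR : R ∈ V n) : ‖timeEvolAddHom H s R‖ ≤ c n * ‖R‖ :=
    hyp (n + 1) n.succ_pos s hs R (by exact_mod_cast supportedIn_of_mem_supported hR)
  obtain ⟨N, hN⟩ := exists_forall_Ico_inter_Icc_eq a b
  have hQ : Q ∈ V N := mem_supported_of_eq _ (hN N le_rfl) Q
  rw [tsum_eq_sum (s := range N) fun n hn => by
    rw [distSupp_of_eq _ (hN n (by simpa using hn)), mul_zero], mul_sum]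
  refine (norm_map_le_add_sum_mul_infDist (timeEvolAddHom H s) hV hc hT hQ).trans
    (add_le_add_right (sum_le_sum fun n _ => ?_) _)
  calc (c n + c (n + 1)) * infDist Q (V n) = (1 + G ^ 2) * c n * infDist Q (V n) := by
        simp only [c]; ring
    _ ≤ (1 + G ^ 2) * (c n * distSupp d _ inter_subset_left Q) := by
        rw [mul_assoc]
        gcongr
        · exact hc n
        · exact infDist_supported_le_distSupp _ Q

/-- Lemma `localityDynamics`. If the complex-time evolution generated by a
self-adjoint `H` on a finite interval `M = [a,b)` satisfies `‖e^{isH} R e^{-isH}‖ ≤ 𝒢^{2n} ‖R‖`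
for observables `R` supported in `I_n = M ∩ [1-n, n]`, then for every observable `Q` and
`|s| ≤ 1`:
`‖e^{isH} Q e^{-isH}‖ ≤ 𝒢² ‖Q‖ + (1 + 𝒢²) ∑_{n ≥ 1} 𝒢^{2n} ‖Q‖_{I_n}`. -/
theorem locality_of_dynamics (d : ℕ) (hd : 2 ≤ d) (a b : ℤ) (G : ℝ) (hG : 1 < G)
    (H : Obs d (Finset.Ico a b)) (hH : H.IsHermitian)
    (hyp : ∀ n : ℕ, 1 ≤ n → ∀ s : ℂ, ‖s‖ ≤ 1 →
      ∀ R : Obs d (Finset.Ico a b),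
        SupportedIn d (Finset.Ico a b ∩ Finset.Icc (1 - (n : ℤ)) (n : ℤ)) R →
        opNorm d (timeEvol d H s R) ≤ G ^ (2 * n) * opNorm d R)
    (Q : Obs d (Finset.Ico a b)) (s : ℂ) (hs : ‖s‖ ≤ 1) :
    opNorm d (timeEvol d H s Q) ≤
      G ^ 2 * opNorm d Q +
        (1 + G ^ 2) *
          ∑' n : ℕ,
            G ^ (2 * (n + 1)) *
              distSupp d (Finset.Ico a b ∩ Finset.Icc (1 - ((n : ℤ) + 1)) ((n : ℤ) + 1))
                Finset.inter_subset_left Q :=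
  locality_of_dynamics_general d a b G H hyp Q s hs

end SpinChain
end
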